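/- For every agent a let Φ_a be a finite set of formulas and ψ_a a formula of arrow update model logic. Then the multi-agent reduction axiom ⟨↑⟩⋀_{a∈A}(⋀_{φ∈Φ_a}◇_a φ ∧ □_a ψ_a) ↔ ⋀_{a∈A}⋀_{φ∈Φ_a}◇_a⟨↑⟩(φ ∧ ψ_a) is valid. -/

import Mathlib

namespace AAUML

/-- Formulas of arbitrary arrow update model logic over atoms `P` and agents `A`.
An arrow update model is encoded as a finite list of arrows
`(agent, source outcome, source condition, target outcome, target condition)`,
with outcomes drawn from `ℕ`; `upd U o φ` is `[U,o]φ` and `all φ` is `[↑]φ`. -/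
inductive Form (P A : Type) : Type where
  | atom : P → Form P A
  | neg  : Form P A → Form P A
  | and  : Form P A → Form P A → Form P A
  | box  : A → Form P A → Form P A
  | upd  : List (A × ℕ × Form P A × ℕ × Form P A) → ℕ → Form P A → Form P A
  | all  : Form P A → Form P A

/-- An arrow: agent, source outcome, source condition, target outcome, target condition. -/
abbrev Arrow (P A : Type) := A × ℕ × Form P A × ℕ × Form P A

/-- Formulas of basic multi-agent modal logic: no update modality, no quantifier. -/
inductive Form.Modal {P A : Type} : Form P A → Prop
  | atom (p : P) : Form.Modal (.atom p)
  | neg {φ : Form P A} : Form.Modal φ → Form.Modal (.neg φ)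
  | and {φ ψ : Form P A} : Form.Modal φ → Form.Modal ψ → Form.Modal (.and φ ψ)
  | box (a : A) {φ : Form P A} : Form.Modal φ → Form.Modal (.box a φ)

/-- Formulas of arrow update model logic (no arbitrary-update quantifier anywhere,
including inside the conditions of arrow update models). -/
inductive Form.NoQuant {P A : Type} : Form P A → Prop
  | atom (p : P) : Form.NoQuant (.atom p)
  | neg {φ : Form P A} : Form.NoQuant φ → Form.NoQuant (.neg φ)
  | and {φ ψ : Form P A} : Form.NoQuant φ → Form.NoQuant ψ → Form.NoQuant (.and φ ψ)
  | box (a : A) {φ : Form P A} : Form.NoQuant φ → Form.NoQuant (.box a φ)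
  | upd {U : List (Arrow P A)} (o : ℕ) {φ : Form P A} : Form.NoQuant φ →
      (∀ ar ∈ U, Form.NoQuant ar.2.2.1) → (∀ ar ∈ U, Form.NoQuant ar.2.2.2.2) →
      Form.NoQuant (.upd U o φ)

/-- Propositional formulas (no modalities at all). -/
inductive Form.Prp {P A : Type} : Form P A → Prop
  | atom (p : P) : Form.Prp (.atom p)
  | neg {φ : Form P A} : Form.Prp φ → Form.Prp (.neg φ)
  | and {φ ψ : Form P A} : Form.Prp φ → Form.Prp ψ → Form.Prp (.and φ ψ)

/-- A relational (Kripke) model. -/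
structure KModel (P A : Type) : Type 1 where
  World : Type
  R : A → World → World → Prop
  V : World → P → Prop

variable {P A : Type}

/-- Satisfaction for basic modal formulas (junk value `False` on updates/quantifiers;
only used on modal formulas). -/
def msat (M : KModel P A) : M.World → Form P A → Prop
  | s, .atom p => M.V s p
  | s, .neg φ => ¬ msat M s φ
  | s, .and φ ψ => msat M s φ ∧ msat M s ψ
  | s, .box a φ => ∀ t, M.R a s t → msat M t φ
  | _, .upd _ _ _ => False
  | _, .all _ => False

/-- Some arrow of `U` for agent `a` from outcome `o` to outcome `o'` has its (modal)
source condition true at `s` and its target condition true at `s'`. -/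
def marrowOK (M : KModel P A) (U : List (Arrow P A)) (a : A) (o o' : ℕ)
    (s s' : M.World) : Prop :=
  ∃ ψ ψ', (a, o, ψ, o', ψ') ∈ U ∧ msat M s ψ ∧ msat M s' ψ'

/-- All source and target conditions of `U` are basic modal formulas. -/
def ModalArrows (U : List (Arrow P A)) : Prop :=
  ∀ ar ∈ U, Form.Modal ar.2.2.1 ∧ Form.Modal ar.2.2.2.2

mutual
  /-- Satisfaction `M,s ⊨ φ`.  The case `upd U o φ` is interpreted in the product
  model `M*U` (inlined); `all φ` quantifies over all arrow update models with basic
  modal source and target conditions. -/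
  def Form.sat : (M : KModel P A) → M.World → Form P A → Prop
    | M, s, .atom p => M.V s p
    | M, s, .neg φ => ¬ Form.sat M s φ
    | M, s, .and φ ψ => Form.sat M s φ ∧ Form.sat M s ψ
    | M, s, .box a φ => ∀ t, M.R a s t → Form.sat M t φ
    | M, s, .upd U o φ =>
        Form.sat ⟨M.World × ℕ,
          fun a x y => M.R a x.1 y.1 ∧ satList M U a x.2 y.2 x.1 y.1,
          fun x p => M.V x.1 p⟩ (s, o) φ
    | M, s, .all φ => ∀ (U : List (Arrow P A)) (o : ℕ), ModalArrows U →
        Form.sat ⟨M.World × ℕ,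
          fun a x y => M.R a x.1 y.1 ∧ marrowOK M U a x.2 y.2 x.1 y.1,
          fun x p => M.V x.1 p⟩ (s, o) φ
  termination_by M s φ => sizeOf φ

  /-- Some arrow of the list, for agent `a`, from `o` to `o'`, has its source condition
  true at `s` and its target condition true at `s'`. -/
  def satList : (M : KModel P A) → List (Arrow P A) → A → ℕ → ℕ → M.World → M.World → Prop
    | _, [], _, _, _, _, _ => False
    | M, (b, o1, ψ, o2, ψ') :: rest, a, o, o', s, s' =>
        (b = a ∧ o1 = o ∧ o2 = o' ∧ Form.sat M s ψ ∧ Form.sat M s' ψ') ∨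
        satList M rest a o o' s s'
  termination_by M U a o o' s s' => sizeOf U
end

/-- The product `M*U` of a relational model and an arrow update model. -/
def prodModel (M : KModel P A) (U : List (Arrow P A)) : KModel P A :=
  ⟨M.World × ℕ,
   fun a x y => M.R a x.1 y.1 ∧ satList M U a x.2 y.2 x.1 y.1,
   fun x p => M.V x.1 p⟩

def Valid (φ : Form P A) : Prop := ∀ (M : KModel P A) (s : M.World), Form.sat M s φ

def Form.or (φ ψ : Form P A) : Form P A := .neg (.and (.neg φ) (.neg ψ))
def Form.imp (φ ψ : Form P A) : Form P A := .neg (.and φ (.neg ψ))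
def Form.dia (a : A) (φ : Form P A) : Form P A := .neg (.box a (.neg φ))
/-- `⟨U,o⟩φ` -/
def Form.diaUpd (U : List (Arrow P A)) (o : ℕ) (φ : Form P A) : Form P A :=
  .neg (.upd U o (.neg φ))
/-- `⟨↑⟩φ` -/
def Form.ex (φ : Form P A) : Form P A := .neg (.all (.neg φ))
/-- A canonical tautology. -/
def Form.top [Inhabited P] : Form P A := .neg (.and (.atom default) (.neg (.atom default)))
/-- Finite conjunction. -/
def Form.conj [Inhabited P] : List (Form P A) → Form P A
  | [] => Form.top
  | φ :: rest => .and φ (Form.conj rest)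

/-- `Z` is a bisimulation between `M` and `N`. -/
def IsBisim (M N : KModel P A) (Z : M.World → N.World → Prop) : Prop :=
  ∀ s s', Z s s' →
    (∀ p, M.V s p ↔ N.V s' p) ∧
    (∀ a t, M.R a s t → ∃ t', N.R a s' t' ∧ Z t t') ∧
    (∀ a t', N.R a s' t' → ∃ t, M.R a s t ∧ Z t t')

/-- Bisimilarity of pointed models. -/
def Bisimilar (M : KModel P A) (s : M.World) (N : KModel P A) (s' : N.World) : Prop :=
  ∃ Z, IsBisim M N Z ∧ Z s s'

/-- An action model: actions with accessibility relations and preconditions. -/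
structure AModel (P A : Type) : Type 1 where
  Action : Type
  rel : A → Action → Action → Prop
  pre : Action → Form P A

/-- The restricted modal product `M ⊗ E`. -/
def actProd (M : KModel P A) (E : AModel P A) : KModel P A :=
  ⟨{x : M.World × E.Action // Form.sat M x.1 (E.pre x.2)},
   fun a x y => M.R a x.1.1 y.1.1 ∧ E.rel a x.1.2 y.1.2,
   fun x p => M.V x.1.1 p⟩

/-- `M,s ⊨ [E,e]φ`: if the precondition of `e` holds at `s` then `φ` holds at `(s,e)`
in `M ⊗ E`. -/
def actSat (M : KModel P A) (E : AModel P A) (s : M.World) (e : E.Action)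
    (φ : Form P A) : Prop :=
  ∀ h : Form.sat M s (E.pre e), Form.sat (actProd M E) ⟨(s, e), h⟩ φ

/-!
If `(U, o)` witnesses the left-hand side, then each `◇_a φ` at `(s, o)` yields an
`a`-successor `(t, o')` where `φ` holds, and `ψ_a` holds there by `□_a ψ_a`; so `(U, o')`
witnesses `⟨↑⟩(φ ∧ ψ_a)` at `t`.

Conversely, choose for every pair `(a, φ)` with `φ ∈ Φ_a` an `a`-successor `t` of `s` and an
update `(U, o)` with `M*U, (t, o) ⊨ φ ∧ ψ_a`. By the reduction axioms every formula of arrow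
update model logic is equivalent to a basic modal one, so `[U, o]ψ_a` is equivalent to a modal
`θ`. Put disjoint copies of all these updates side by side and add a single fresh outcome with,
for each pair, an `a`-arrow of source condition `⊤` and target condition `θ` into the copy of
`o`. Each copy is bisimilar to its original, which gives `◇_a φ` at the fresh point, and every
`a`-successor of the fresh point satisfies one of the `θ`, which gives `□_a ψ_a`.
-/

section Semantics

variable (M : KModel P A) (s : M.World)

theorem sat_atom (p : P) : Form.sat M s (.atom p) ↔ M.V s p := by
  rw [Form.sat]

theorem sat_neg (φ : Form P A) : Form.sat M s (.neg φ) ↔ ¬ Form.sat M s φ := by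
  rw [Form.sat]

theorem sat_and (φ ψ : Form P A) :
    Form.sat M s (.and φ ψ) ↔ Form.sat M s φ ∧ Form.sat M s ψ := by
  rw [Form.sat]

theorem sat_box (a : A) (φ : Form P A) :
    Form.sat M s (.box a φ) ↔ ∀ t, M.R a s t → Form.sat M t φ := by
  rw [Form.sat]

theorem sat_upd (U : List (Arrow P A)) (o : ℕ) (φ : Form P A) :
    Form.sat M s (.upd U o φ) ↔ Form.sat (prodModel M U) (s, o) φ := by
  rw [Form.sat]; rfl

theorem sat_imp (φ ψ : Form P A) :
    Form.sat M s (φ.imp ψ) ↔ (Form.sat M s φ → Form.sat M s ψ) := by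
  rw [Form.imp, sat_neg, sat_and, sat_neg, not_and_not_right]

theorem sat_dia (a : A) (φ : Form P A) :
    Form.sat M s (Form.dia a φ) ↔ ∃ t, M.R a s t ∧ Form.sat M t φ := by
  simp only [Form.dia, sat_neg, sat_box, not_forall, not_not, exists_prop]

theorem sat_top [Inhabited P] : Form.sat M s Form.top := by
  rw [Form.top, sat_neg, sat_and, sat_neg]
  exact fun h => h.2 h.1

theorem sat_conj [Inhabited P] (l : List (Form P A)) :
    Form.sat M s (Form.conj l) ↔ ∀ φ ∈ l, Form.sat M s φ := by
  induction l with
  | nil => simpa [Form.conj] using sat_top M s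
  | cons φ l ih => simp [Form.conj, sat_and, ih]

theorem satList_iff (U : List (Arrow P A)) (a : A) (o o' : ℕ) (t : M.World) :
    satList M U a o o' s t ↔
      ∃ src tgt, (a, o, src, o', tgt) ∈ U ∧ Form.sat M s src ∧ Form.sat M t tgt := by
  induction U with
  | nil => simp [satList]
  | cons ar U ih =>
    obtain ⟨b, o₁, src, o₂, tgt⟩ := ar
    rw [satList, ih]
    simp only [List.mem_cons, Prod.mk.injEq]
    constructor
    · rintro (⟨rfl, rfl, rfl, h₁, h₂⟩ | ⟨src', tgt', hm, h₁, h₂⟩)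
      · exact ⟨src, tgt, .inl ⟨rfl, rfl, rfl, rfl, rfl⟩, h₁, h₂⟩
      · exact ⟨src', tgt', .inr hm, h₁, h₂⟩
    · rintro ⟨src', tgt', ⟨rfl, rfl, rfl, rfl, rfl⟩ | hm, h₁, h₂⟩
      · exact .inl ⟨rfl, rfl, rfl, h₁, h₂⟩
      · exact .inr ⟨src', tgt', hm, h₁, h₂⟩

theorem prodModel_R_iff (U : List (Arrow P A)) (a : A) (x y : M.World × ℕ) :
    (prodModel M U).R a x y ↔ M.R a x.1 y.1 ∧
      ∃ src tgt, (a, x.2, src, y.2, tgt) ∈ U ∧ Form.sat M x.1 src ∧ Form.sat M y.1 tgt :=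
  and_congr_right fun _ => satList_iff M x.1 U a x.2 y.2 y.1

theorem msat_iff_sat {φ : Form P A} (hφ : φ.Modal) : msat M s φ ↔ Form.sat M s φ := by
  induction hφ generalizing s with
  | atom p => rw [msat, sat_atom]
  | neg _ ih => rw [msat, sat_neg, ih]
  | and _ _ ih₁ ih₂ => rw [msat, sat_and, ih₁, ih₂]
  | box a _ ih => rw [msat, sat_box]; exact forall₂_congr fun t _ => ih t

theorem marrowOK_iff_satList {U : List (Arrow P A)} (hU : ModalArrows U) (a : A) (o o' : ℕ)
    (t : M.World) : marrowOK M U a o o' s t ↔ satList M U a o o' s t := by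
  rw [satList_iff, marrowOK]
  refine exists₂_congr fun src tgt => and_congr_right fun hm => ?_
  exact and_congr (msat_iff_sat M s (hU _ hm).1) (msat_iff_sat M t (hU _ hm).2)

theorem sat_all (φ : Form P A) :
    Form.sat M s (.all φ) ↔
      ∀ U o, ModalArrows U → Form.sat (prodModel M U) (s, o) φ := by
  rw [Form.sat]
  refine forall₃_congr fun U o hU => ?_
  have hR : (fun a (x y : M.World × ℕ) => M.R a x.1 y.1 ∧ marrowOK M U a x.2 y.2 x.1 y.1) =
      fun a x y => M.R a x.1 y.1 ∧ satList M U a x.2 y.2 x.1 y.1 := by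
    simp only [marrowOK_iff_satList M _ hU]
  rw [hR]
  rfl

theorem sat_ex (φ : Form P A) :
    Form.sat M s (Form.ex φ) ↔
      ∃ U o, ModalArrows U ∧ Form.sat (prodModel M U) (s, o) φ := by
  simp only [Form.ex, sat_neg, sat_all, not_forall, exists_prop]
  exact exists₂_congr fun U o => and_congr_right fun _ => by
    rw [sat_neg (prodModel M U) (s, o), not_not]

end Semantics

section Bisimulation

variable {M N : KModel P A} {Z : M.World → N.World → Prop}

theorem IsBisim.sat_box_iff (hZ : IsBisim M N Z) {φ : Form P A}
    (hφ : ∀ t t', Z t t' → (Form.sat M t φ ↔ Form.sat N t' φ)) {s : M.World} {s' : N.World}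
    (h : Z s s') (a : A) : Form.sat M s (.box a φ) ↔ Form.sat N s' (.box a φ) := by
  rw [sat_box, sat_box]
  constructor
  · intro hs t' ht'
    obtain ⟨t, ht, htt'⟩ := (hZ s s' h).2.2 a t' ht'
    exact (hφ t t' htt').1 (hs t ht)
  · intro hs t ht
    obtain ⟨t', ht', htt'⟩ := (hZ s s' h).2.1 a t ht
    exact (hφ t t' htt').2 (hs t' ht')

theorem IsBisim.prodModel (hZ : IsBisim M N Z) {U : List (Arrow P A)}
    (hU : ∀ ar ∈ U, ∀ x y, Z x y →
      (Form.sat M x ar.2.2.1 ↔ Form.sat N y ar.2.2.1) ∧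
      (Form.sat M x ar.2.2.2.2 ↔ Form.sat N y ar.2.2.2.2)) :
    IsBisim (prodModel M U) (prodModel N U) (fun x y => Z x.1 y.1 ∧ x.2 = y.2) := by
  rintro ⟨x, k⟩ ⟨y, k'⟩ ⟨hxy, rfl : k = k'⟩
  refine ⟨(hZ x y hxy).1, ?_, ?_⟩
  · rintro a ⟨x', l⟩ h
    obtain ⟨hR, src, tgt, hm, hsrc, htgt⟩ := (prodModel_R_iff M U a _ _).1 h
    obtain ⟨y', hR', hxy'⟩ := (hZ x y hxy).2.1 a x' hR
    refine ⟨(y', l), (prodModel_R_iff N U a _ _).2 ⟨hR', src, tgt, hm, ?_, ?_⟩, hxy', rfl⟩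
    · exact ((hU _ hm x y hxy).1).1 hsrc
    · exact ((hU _ hm x' y' hxy').2).1 htgt
  · rintro a ⟨y', l⟩ h
    obtain ⟨hR, src, tgt, hm, hsrc, htgt⟩ := (prodModel_R_iff N U a _ _).1 h
    obtain ⟨x', hR', hxy'⟩ := (hZ x y hxy).2.2 a y' hR
    refine ⟨(x', l), (prodModel_R_iff M U a _ _).2 ⟨hR', src, tgt, hm, ?_, ?_⟩, hxy', rfl⟩
    · exact ((hU _ hm x y hxy).1).2 hsrc
    · exact ((hU _ hm x' y' hxy').2).2 htgt

theorem Form.Modal.sat_iff_of_isBisim {φ : Form P A} (hφ : φ.Modal) (hZ : IsBisim M N Z)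
    {s : M.World} {s' : N.World} (h : Z s s') : Form.sat M s φ ↔ Form.sat N s' φ := by
  induction hφ generalizing s s' with
  | atom p => rw [sat_atom, sat_atom]; exact (hZ s s' h).1 p
  | neg _ ih => rw [sat_neg, sat_neg, ih h]
  | and _ _ ih₁ ih₂ => rw [sat_and, sat_and, ih₁ h, ih₂ h]
  | box a _ ih => exact hZ.sat_box_iff (fun _ _ => ih) h a

theorem sat_iff_of_isBisim : (φ : Form P A) → {M N : KModel P A} →
    {Z : M.World → N.World → Prop} → IsBisim M N Z → {s : M.World} → {s' : N.World} →
    Z s s' → (Form.sat M s φ ↔ Form.sat N s' φ)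
  | .atom p, _, _, _, hZ, s, s', h => by rw [sat_atom, sat_atom]; exact (hZ s s' h).1 p
  | .neg φ, _, _, _, hZ, _, _, h => by rw [sat_neg, sat_neg, sat_iff_of_isBisim φ hZ h]
  | .and φ ψ, _, _, _, hZ, _, _, h => by
    rw [sat_and, sat_and, sat_iff_of_isBisim φ hZ h, sat_iff_of_isBisim ψ hZ h]
  | .box a φ, _, _, _, hZ, _, _, h => hZ.sat_box_iff (fun _ _ => sat_iff_of_isBisim φ hZ) h a
  | .upd U o φ, _, _, _, hZ, _, _, h => by
    rw [sat_upd, sat_upd]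
    refine sat_iff_of_isBisim φ (hZ.prodModel fun ar hm x y hxy => ?_) ⟨h, rfl⟩
    exact ⟨sat_iff_of_isBisim ar.2.2.1 hZ hxy, sat_iff_of_isBisim ar.2.2.2.2 hZ hxy⟩
  | .all φ, _, _, _, hZ, _, _, h => by
    -- the conditions of the quantified updates are not subformulas of `φ`, but they are modal
    rw [sat_all, sat_all]
    refine forall₃_congr fun U o hU => sat_iff_of_isBisim φ (hZ.prodModel ?_) ⟨h, rfl⟩
    exact fun ar hm x y hxy => ⟨(hU ar hm).1.sat_iff_of_isBisim hZ hxy,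
      (hU ar hm).2.sat_iff_of_isBisim hZ hxy⟩
termination_by φ => sizeOf φ
decreasing_by
  all_goals simp_wf
  all_goals first
    | omega
    | have := List.sizeOf_lt_of_mem hm
      obtain ⟨b, o₁, src, o₂, tgt⟩ := ar
      simp only [Prod.mk.sizeOf_spec] at this ⊢
      omega

end Bisimulation

section Reduction

theorem Form.Modal.imp {φ ψ : Form P A} (hφ : φ.Modal) (hψ : ψ.Modal) : (φ.imp ψ).Modal :=
  .neg (.and hφ (.neg hψ))

theorem Form.Modal.top [Inhabited P] : (Form.top : Form P A).Modal :=
  .neg (.and (.atom _) (.neg (.atom _)))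

theorem Form.Modal.conj [Inhabited P] {l : List (Form P A)} (h : ∀ φ ∈ l, φ.Modal) :
    (Form.conj l).Modal := by
  induction l with
  | nil => exact .top
  | cons φ l ih =>
    exact .and (h φ List.mem_cons_self) (ih fun ψ hψ => h ψ (List.mem_cons_of_mem φ hψ))

variable [Inhabited P] [DecidableEq A]

/-- The reduction axioms: `[U,o]□_a χ` becomes the conjunction of `src → □_a (tgt → [U,o']χ)`
over the `a`-arrows `(o, src, o', tgt)` of `U`. Formulas outside the modal fragment are left as
`[U,o]χ`, so that `sat_reduceUpd` holds for every `χ`. -/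
def reduceUpd (U : List (Arrow P A)) : ℕ → Form P A → Form P A
  | _, .atom p => .atom p
  | o, .neg χ => .neg (reduceUpd U o χ)
  | o, .and χ₁ χ₂ => .and (reduceUpd U o χ₁) (reduceUpd U o χ₂)
  | o, .box a χ => Form.conj ((U.filter fun ar => ar.1 = a ∧ ar.2.1 = o).map fun ar =>
      ar.2.2.1.imp (.box a (ar.2.2.2.2.imp (reduceUpd U ar.2.2.2.1 χ))))
  | o, χ => .upd U o χ

theorem sat_reduceUpd (M : KModel P A) (U : List (Arrow P A)) (o : ℕ) (χ : Form P A)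
    (s : M.World) : Form.sat M s (reduceUpd U o χ) ↔ Form.sat (prodModel M U) (s, o) χ := by
  fun_induction reduceUpd U o χ generalizing s with
  | case1 o p => rw [sat_atom, sat_atom (prodModel M U) (s, o)]; rfl
  | case2 o χ ih => rw [sat_neg, sat_neg (prodModel M U) (s, o), ih]
  | case3 o χ₁ χ₂ ih₁ ih₂ => rw [sat_and, sat_and (prodModel M U) (s, o), ih₁, ih₂]
  | case4 o a χ ih =>
    rw [sat_conj, List.forall_mem_map, List.forall_mem_filter, sat_box (prodModel M U) (s, o)]
    simp only [decide_eq_true_eq, and_imp, sat_imp, sat_box, ih]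
    constructor
    · rintro h ⟨t, o'⟩ hR
      obtain ⟨hR, src, tgt, hm, hsrc, htgt⟩ := (prodModel_R_iff M U a (s, o) (t, o')).1 hR
      exact h _ hm rfl rfl hsrc t hR htgt
    · rintro h ⟨b, o₁, src, o₂, tgt⟩ hm rfl rfl hsrc t hR htgt
      exact h (t, o₂) ((prodModel_R_iff M U b _ _).2 ⟨hR, src, tgt, hm, hsrc, htgt⟩)
  | case5 o χ => rw [sat_upd]

theorem Form.Modal.reduceUpd {χ : Form P A} (hχ : χ.Modal)
    {U : List (Arrow P A)} (hU : ModalArrows U) (o : ℕ) : (reduceUpd U o χ).Modal := by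
  induction hχ generalizing o with
  | atom p => exact .atom p
  | neg _ ih => exact .neg (ih o)
  | and _ _ ih₁ ih₂ => exact .and (ih₁ o) (ih₂ o)
  | box a _ ih =>
    rw [AAUML.reduceUpd]
    refine .conj (List.forall_mem_map.2 fun ar hm => ?_)
    have hU' := hU ar (List.mem_filter.1 hm).1
    exact hU'.1.imp (.box a (hU'.2.imp (ih _)))

end Reduction

section ModalTranslation

theorem exists_modalArrows_satList_eq {U : List (Arrow P A)}
    (h : ∀ ar ∈ U,
      (∃ src : Form P A, src.Modal ∧ ∀ M s, Form.sat M s ar.2.2.1 ↔ Form.sat M s src) ∧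
      (∃ tgt : Form P A, tgt.Modal ∧ ∀ M s, Form.sat M s ar.2.2.2.2 ↔ Form.sat M s tgt)) :
    ∃ U', ModalArrows U' ∧ ∀ M : KModel P A, satList M U = satList M U' := by
  induction U with
  | nil => exact ⟨[], fun _ h => absurd h List.not_mem_nil, fun _ => rfl⟩
  | cons ar U ih =>
    obtain ⟨⟨src', hsrc', hsrc⟩, ⟨tgt', htgt', htgt⟩⟩ := h ar List.mem_cons_self
    obtain ⟨U', hU', hsat⟩ := ih fun ar' hm => h ar' (List.mem_cons_of_mem ar hm)
    obtain ⟨b, o₁, src, o₂, tgt⟩ := ar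
    refine ⟨(b, o₁, src', o₂, tgt') :: U', ?_, fun M => ?_⟩
    · rintro ar' (_ | ⟨_, hm⟩)
      exacts [⟨hsrc', htgt'⟩, hU' ar' hm]
    · funext a o o' s t
      rw [satList, satList, hsrc M s, htgt M t, hsat M]

theorem Form.NoQuant.exists_modal_equiv [Inhabited P] {φ : Form P A} (hφ : φ.NoQuant) :
    ∃ φ' : Form P A, φ'.Modal ∧ ∀ M s, Form.sat M s φ ↔ Form.sat M s φ' := by
  classical
  induction hφ with
  | atom p => exact ⟨.atom p, .atom p, fun M s => Iff.rfl⟩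
  | neg _ ih =>
    obtain ⟨φ', hφ', hsat⟩ := ih
    exact ⟨.neg φ', .neg hφ', fun M s => by rw [sat_neg, sat_neg, hsat]⟩
  | and _ _ ih₁ ih₂ =>
    obtain ⟨φ₁, hφ₁, hsat₁⟩ := ih₁
    obtain ⟨φ₂, hφ₂, hsat₂⟩ := ih₂
    exact ⟨.and φ₁ φ₂, .and hφ₁ hφ₂, fun M s => by rw [sat_and, sat_and, hsat₁, hsat₂]⟩
  | box a _ ih =>
    obtain ⟨φ', hφ', hsat⟩ := ih
    exact ⟨.box a φ', .box a hφ', fun M s => by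
      rw [sat_box, sat_box]; exact forall₂_congr fun t _ => hsat M t⟩
  | @upd U o χ _ _ _ ihχ ihsrc ihtgt =>
    obtain ⟨U', hU', hsatList⟩ :=
      exists_modalArrows_satList_eq fun ar hm => ⟨ihsrc ar hm, ihtgt ar hm⟩
    obtain ⟨χ', hχ', hsat⟩ := ihχ
    refine ⟨reduceUpd U' o χ', hχ'.reduceUpd hU' o, fun M s => ?_⟩
    rw [sat_reduceUpd, sat_upd]
    unfold prodModel
    rw [hsatList M]
    exact hsat _ _

end ModalTranslation

section Merge

def relabelArrow (f : ℕ → ℕ) (ar : Arrow P A) : Arrow P A :=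
  (ar.1, f ar.2.1, ar.2.2.1, f ar.2.2.2.1, ar.2.2.2.2)

theorem isBisim_prodModel_relabel {f : ℕ → ℕ} (hf : f.Injective) {U C : List (Arrow P A)}
    (hsub : ∀ ar ∈ U, relabelArrow f ar ∈ C)
    (hsrc : ∀ ar ∈ C, ∀ k, ar.2.1 = f k → ∃ ar₀ ∈ U, ar = relabelArrow f ar₀)
    (M : KModel P A) :
    IsBisim (prodModel M C) (prodModel M U) (fun x y => x.1 = y.1 ∧ x.2 = f y.2) := by
  rintro ⟨x, _⟩ ⟨_, k⟩ ⟨rfl : x = _, rfl : _ = f k⟩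
  refine ⟨fun p => Iff.rfl, ?_, ?_⟩
  · rintro a ⟨t, l⟩ h
    obtain ⟨hR, src, tgt, hm, hs, ht⟩ := (prodModel_R_iff M C a _ _).1 h
    obtain ⟨⟨b, k₁, src₀, k₂, tgt₀⟩, hm₀, he⟩ := hsrc _ hm k rfl
    simp only [relabelArrow, Prod.mk.injEq] at he
    obtain ⟨rfl, hk, rfl, rfl, rfl⟩ := he
    cases hf hk
    exact ⟨(t, k₂), (prodModel_R_iff M U _ _ _).2 ⟨hR, src, tgt, hm₀, hs, ht⟩, rfl, rfl⟩
  · rintro a ⟨t, l⟩ h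
    obtain ⟨hR, src, tgt, hm, hs, ht⟩ := (prodModel_R_iff M U a _ _).1 h
    exact ⟨(t, f l), (prodModel_R_iff M C a _ _).2 ⟨hR, src, tgt, hsub _ hm, hs, ht⟩, rfl, rfl⟩

def mergeTag (i k : ℕ) : ℕ := Nat.pair i k + 1

theorem mergeTag_injective (i : ℕ) : (mergeTag i).Injective := fun k l h => by
  simpa [mergeTag] using h

variable [Inhabited P] {n : ℕ} (a : Fin n → A) (U : Fin n → List (Arrow P A)) (o : Fin n → ℕ)
  (θ : Fin n → Form P A)

/-- Outcome `0` is a fresh point with an `a i`-arrow to the copy of `(U i, o i)` guarded by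
`θ i`; the `i`-th copy of `U i` lives on the outcomes `mergeTag i k`, which avoid `0`. -/
def mergeArrows : List (Arrow P A) :=
  (List.finRange n).flatMap (fun i => (U i).map (relabelArrow (mergeTag i))) ++
    (List.finRange n).map fun i => (a i, 0, Form.top, mergeTag i (o i), θ i)

theorem mem_mergeArrows {ar : Arrow P A} :
    ar ∈ mergeArrows a U o θ ↔
      (∃ i, ∃ ar₀ ∈ U i, ar = relabelArrow (mergeTag i) ar₀) ∨
        ∃ i, ar = (a i, 0, Form.top, mergeTag i (o i), θ i) := by
  simp only [mergeArrows, List.mem_append, List.mem_flatMap, List.mem_finRange, true_and,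
    List.mem_map]
  exact or_congr (exists_congr fun i => by simp only [eq_comm]) (by simp only [eq_comm])

theorem modalArrows_mergeArrows (hU : ∀ i, ModalArrows (U i)) (hθ : ∀ i, (θ i).Modal) :
    ModalArrows (mergeArrows a U o θ) := by
  intro ar hm
  rcases (mem_mergeArrows a U o θ).1 hm with ⟨i, ar₀, hm₀, rfl⟩ | ⟨i, rfl⟩
  exacts [hU i ar₀ hm₀, ⟨.top, hθ i⟩]

theorem isBisim_mergeArrows (M : KModel P A) (i : Fin n) :
    IsBisim (prodModel M (mergeArrows a U o θ)) (prodModel M (U i))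
      (fun x y => x.1 = y.1 ∧ x.2 = mergeTag i y.2) := by
  refine isBisim_prodModel_relabel (mergeTag_injective i)
    (fun ar hm => (mem_mergeArrows a U o θ).2 (.inl ⟨i, ar, hm, rfl⟩)) (fun ar hm k hk => ?_) M
  rcases (mem_mergeArrows a U o θ).1 hm with ⟨j, ar₀, hm₀, rfl⟩ | ⟨j, rfl⟩
  · obtain rfl : j = i := Fin.ext (Nat.pair_eq_pair.1 (Nat.succ_injective hk)).1
    exact ⟨ar₀, hm₀, rfl⟩
  · exact absurd hk.symm (Nat.succ_ne_zero _)

theorem sat_prodModel_mergeArrows (M : KModel P A) (i : Fin n) (x : M.World) (k : ℕ)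
    (χ : Form P A) :
    Form.sat (prodModel M (mergeArrows a U o θ)) (x, mergeTag i k) χ ↔
      Form.sat (prodModel M (U i)) (x, k) χ :=
  sat_iff_of_isBisim χ (isBisim_mergeArrows a U o θ M i) ⟨rfl, rfl⟩

theorem prodModel_mergeArrows_R_zero (M : KModel P A) (b : A) (s : M.World)
    (y : M.World × ℕ) :
    (prodModel M (mergeArrows a U o θ)).R b (s, 0) y ↔
      ∃ i, a i = b ∧ y.2 = mergeTag i (o i) ∧ M.R b s y.1 ∧ Form.sat M y.1 (θ i) := by
  rw [prodModel_R_iff]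
  constructor
  · rintro ⟨hR, src, tgt, hm, -, ht⟩
    rcases (mem_mergeArrows a U o θ).1 hm with ⟨j, ar₀, -, he⟩ | ⟨i, he⟩
    · exact absurd (congrArg (·.2.1) he) (Nat.succ_ne_zero _).symm
    · simp only [Prod.mk.injEq] at he
      obtain ⟨rfl, -, -, hy, rfl⟩ := he
      exact ⟨i, rfl, hy, hR, ht⟩
  · rintro ⟨i, rfl, hy, hR, hθ⟩
    refine ⟨hR, Form.top, θ i, (mem_mergeArrows a U o θ).2 (.inr ⟨i, ?_⟩), sat_top M s, hθ⟩
    rw [hy]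

end Merge

theorem sat_dia_ex_of_sat_prodModel {M : KModel P A} {s : M.World} {U : List (Arrow P A)}
    {o : ℕ} (hU : ModalArrows U) {a : A} {φ ψ : Form P A}
    (hφ : Form.sat (prodModel M U) (s, o) (Form.dia a φ))
    (hψ : Form.sat (prodModel M U) (s, o) (.box a ψ)) :
    Form.sat M s (Form.dia a (Form.ex (φ.and ψ))) := by
  obtain ⟨⟨t, o'⟩, hR, hφt⟩ := (sat_dia (prodModel M U) (s, o) a φ).1 hφ
  refine (sat_dia M s a _).2 ⟨t, hR.1, (sat_ex M t _).2 ⟨U, o', hU, ?_⟩⟩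
  exact (sat_and (prodModel M U) (t, o') φ ψ).2 ⟨hφt, (sat_box _ _ a ψ).1 hψ _ hR⟩

theorem exists_sat_prodModel_of_sat_dia_ex [Inhabited P] {ψ : A → Form P A}
    (hψ : ∀ a, (ψ a).NoQuant) (L : List (A × Form P A)) {M : KModel P A} {s : M.World}
    (h : ∀ p ∈ L, Form.sat M s (Form.dia p.1 (Form.ex (p.2.and (ψ p.1))))) :
    ∃ U o, ModalArrows U ∧ (∀ p ∈ L, Form.sat (prodModel M U) (s, o) (Form.dia p.1 p.2)) ∧
      ∀ a, Form.sat (prodModel M U) (s, o) (.box a (ψ a)) := by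
  classical
  have hwit : ∀ i : Fin L.length, ∃ t, M.R (L.get i).1 s t ∧ ∃ U o, ModalArrows U ∧
      Form.sat (prodModel M U) (t, o) ((L.get i).2.and (ψ (L.get i).1)) := fun i => by
    obtain ⟨t, hR, hex⟩ := (sat_dia M s _ _).1 (h _ (L.get_mem i))
    exact ⟨t, hR, (sat_ex M t _).1 hex⟩
  choose t hR U o hU hsat using hwit
  choose ψ' hψ' hψψ' using fun a => (hψ a).exists_modal_equiv
  set θ := fun i => reduceUpd (U i) (o i) (ψ' (L.get i).1)
  have hθ : ∀ i u, Form.sat M u (θ i) ↔ Form.sat (prodModel M (U i)) (u, o i) (ψ (L.get i).1) :=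
    fun i u => (sat_reduceUpd M (U i) (o i) _ u).trans (hψψ' _ _ _).symm
  set C := mergeArrows (fun i => (L.get i).1) U o θ
  refine ⟨C, 0, modalArrows_mergeArrows _ U o θ hU fun i => (hψ' _).reduceUpd (hU i) _,
    fun p hp => ?_, fun a => ?_⟩
  · obtain ⟨i, rfl⟩ := List.get_of_mem hp
    obtain ⟨hφ, hψi⟩ := (sat_and (prodModel M (U i)) (t i, o i) _ _).1 (hsat i)
    refine (sat_dia (prodModel M C) (s, 0) _ _).2 ⟨(t i, mergeTag i (o i)), ?_, ?_⟩
    · exact (prodModel_mergeArrows_R_zero _ U o θ M _ s _).2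
        ⟨i, rfl, rfl, hR i, (hθ i (t i)).2 hψi⟩
    · exact (sat_prodModel_mergeArrows _ U o θ M i (t i) (o i) _).2 hφ
  · refine (sat_box (prodModel M C) (s, 0) a _).2 fun ⟨u, k⟩ hR' => ?_
    obtain ⟨i, rfl, rfl : k = _, -, hθu⟩ := (prodModel_mergeArrows_R_zero _ U o θ M _ s _).1 hR'
    exact (sat_prodModel_mergeArrows _ U o θ M i u (o i) _).2 ((hθ i u).1 hθu)

section Conjunctions

variable [Inhabited P] (Φ : A → List (Form P A)) (ψ : A → Form P A) (as : List A)
  {M : KModel P A} {s : M.World}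

theorem sat_conj_dia_ex_of_sat_ex_conj
    (h : Form.sat M s (Form.ex (Form.conj (as.map
      fun a => Form.and (Form.conj ((Φ a).map (Form.dia a))) (.box a (ψ a)))))) :
    Form.sat M s (Form.conj (as.map
      fun a => Form.conj ((Φ a).map fun φ => Form.dia a (Form.ex (.and φ (ψ a)))))) := by
  obtain ⟨U, o, hU, hsat⟩ := (sat_ex M s _).1 h
  rw [sat_conj (prodModel M U) (s, o), List.forall_mem_map] at hsat
  simp only [sat_conj, List.forall_mem_map]
  intro a ha φ hφ
  obtain ⟨hdia, hbox⟩ := (sat_and (prodModel M U) (s, o) _ _).1 (hsat a ha)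
  rw [sat_conj (prodModel M U) (s, o), List.forall_mem_map] at hdia
  exact sat_dia_ex_of_sat_prodModel hU (hdia φ hφ) hbox

theorem sat_ex_conj_of_sat_conj_dia_ex (hψ : ∀ a, (ψ a).NoQuant)
    (h : Form.sat M s (Form.conj (as.map
      fun a => Form.conj ((Φ a).map fun φ => Form.dia a (Form.ex (.and φ (ψ a))))))) :
    Form.sat M s (Form.ex (Form.conj (as.map
      fun a => Form.and (Form.conj ((Φ a).map (Form.dia a))) (.box a (ψ a))))) := by
  simp only [sat_conj, List.forall_mem_map] at h
  set L := as.flatMap fun a => (Φ a).map (Prod.mk a)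
  obtain ⟨U, o, hU, hdia, hbox⟩ := exists_sat_prodModel_of_sat_dia_ex hψ L fun p hp => by
    obtain ⟨a, ha, φ, hφ, rfl⟩ : ∃ a ∈ as, ∃ φ ∈ Φ a, (a, φ) = p := by simpa [L] using hp
    exact h a ha φ hφ
  refine (sat_ex M s _).2 ⟨U, o, hU, ?_⟩
  rw [sat_conj (prodModel M U) (s, o), List.forall_mem_map]
  intro a ha
  refine (sat_and (prodModel M U) (s, o) _ _).2 ⟨?_, hbox a⟩
  rw [sat_conj (prodModel M U) (s, o), List.forall_mem_map]
  exact fun φ hφ => hdia (a, φ) (List.mem_flatMap.2 ⟨a, ha, List.mem_map_of_mem hφ⟩)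

end Conjunctions

/-- the multi-agent main reduction axiom:
`⟨↑⟩⋀_{a∈A}(⋀_{φ∈Φ_a}◇_a φ ∧ □_a ψ_a) ↔ ⋀_{a∈A}⋀_{φ∈Φ_a}◇_a⟨↑⟩(φ ∧ ψ_a)` is valid,
where each `Φ_a` is a finite set of formulas and each `ψ_a` a formula of arrow
update model logic, and `A` is the finite set of agents. -/
theorem ex_main_reduction (P A : Type) [Inhabited P] [Fintype A]
    (Φ : A → List (Form P A)) (ψ : A → Form P A)
    (hΦ : ∀ a : A, ∀ φ ∈ Φ a, φ.NoQuant) (hψ : ∀ a : A, (ψ a).NoQuant) :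
    ∀ (M : KModel P A) (s : M.World),
      Form.sat M s (Form.ex (Form.conj ((Finset.univ : Finset A).toList.map
          (fun a => Form.and (Form.conj ((Φ a).map (Form.dia a))) (.box a (ψ a)))))) ↔
        Form.sat M s (Form.conj ((Finset.univ : Finset A).toList.map
          (fun a => Form.conj ((Φ a).map
            (fun φ => Form.dia a (Form.ex (.and φ (ψ a)))))))) :=
  fun _ _ => ⟨sat_conj_dia_ex_of_sat_ex_conj Φ ψ _, sat_ex_conj_of_sat_conj_dia_ex Φ ψ _ hψ⟩
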